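/- arXiv:2509.10342 — 2 statements merged into one kernel-verified Lean document; each statement's English description precedes it below -/
import Mathlib

section
/- Let d ≥ 1, c ≥ 0 and r ≥ 1 an integer. On the open set U₀ = {(x,t) ∈ ℝ^d×ℝ : t > 0, t² − c‖x‖² > 0}, define the first-order operators 𝔇_i g = ∂_{x_i} g + c·(x_i/t)·∂_t g for 1 ≤ i ≤ d and 𝔇_{d+1} g = (sqrt(t²−c‖x‖²)/t)·∂_t g. Let g be r times continuously differentiable on an open set U ⊆ U₀. Then for each 1 ≤ i ≤ d+1 and every point of U, the r-fold application satisfies 𝔇_i^r g = (∂_{y_i}^r (g∘ψ⁻¹))∘ψ, where g∘ψ⁻¹ is defined on ψ(U) ⊆ {(y,v) : v > 0} and ∂_{y_i} denotes the partial derivative in the i-th coordinate of ℝ^{d+1}. -/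
open MeasureTheory

noncomputable section

/-- Euclidean space `ℝ^d`. -/
abbrev Euc (d : ℕ) := EuclideanSpace ℝ (Fin d)

/-- The map `ψ(x,t) = (x, sqrt(t²−c‖x‖²))` (the case `a = 0`, `b = 1`). -/
def psi0 (d : ℕ) (c : ℝ) (p : Euc d × ℝ) : Euc d × ℝ :=
  (p.1, Real.sqrt (p.2 ^ 2 - c * ‖p.1‖ ^ 2))

/-- The inverse map `ψ⁻¹(y,v) = (y, sqrt(v²+c‖y‖²))`. -/
def psi0Inv (d : ℕ) (c : ℝ) (p : Euc d × ℝ) : Euc d × ℝ :=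
  (p.1, Real.sqrt (p.2 ^ 2 + c * ‖p.1‖ ^ 2))

/-- Partial derivative in the `i`-th coordinate of `ℝ^d`, for functions on `ℝ^d × ℝ`. -/
def pdE (d : ℕ) (i : Fin d) (f : Euc d × ℝ → ℝ) (p : Euc d × ℝ) : ℝ :=
  fderiv ℝ f p (EuclideanSpace.single i 1, 0)

/-- Partial derivative in the last coordinate, for functions on `ℝ^d × ℝ`. -/
def pdT (d : ℕ) (f : Euc d × ℝ → ℝ) (p : Euc d × ℝ) : ℝ :=
  fderiv ℝ f p (0, 1)

/-- The first-order operators `𝔇_i`, `1 ≤ i ≤ d+1`: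
`𝔇_i g = ∂_{x_i} g + c (x_i/t) ∂_t g` for `i ≤ d` and
`𝔇_{d+1} g = (sqrt(t²−c‖x‖²)/t) ∂_t g`. -/
def Dfrak (d : ℕ) (c : ℝ) (i : Fin (d + 1)) (g : Euc d × ℝ → ℝ) :
    Euc d × ℝ → ℝ := fun p =>
  if h : (i : ℕ) < d then
    pdE d ⟨i, h⟩ g p + c * (p.1 ⟨i, h⟩ / p.2) * pdT d g p
  else
    (Real.sqrt (p.2 ^ 2 - c * ‖p.1‖ ^ 2) / p.2) * pdT d g p

/-- The partial derivative `∂_{y_i}` in the `i`-th coordinate of `ℝ^{d+1}`. -/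
def Pder (d : ℕ) (i : Fin (d + 1)) (g : Euc d × ℝ → ℝ) : Euc d × ℝ → ℝ := fun p =>
  if h : (i : ℕ) < d then pdE d ⟨i, h⟩ g p else pdT d g p

/-! On `ψ(U)` the map `ψ⁻¹` is a smooth inverse of `ψ`, and the derivative of the last coordinate
of `ψ⁻¹` at `ψ(x,t)` in the direction `(w, a)` is `(c ⟪x, w⟫ + sqrt(t² − c‖x‖²) a) / t`. So the
chain rule gives `∂_{y_i} (g ∘ ψ⁻¹) = (𝔇_i g) ∘ ψ⁻¹` on the open set `ψ(U)`. As `∂_{y_i}` is local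
and `𝔇_i` maps `C^{r+1}` functions on `U` to `C^r` functions, induction on `r` gives the claim. -/

def psi0Domain (d : ℕ) (c : ℝ) : Set (Euc d × ℝ) :=
  {p | 0 < p.2 ∧ 0 < p.2 ^ 2 - c * ‖p.1‖ ^ 2}

section

variable {d : ℕ} {c : ℝ}

lemma psi0Inv_psi0 {p : Euc d × ℝ} (ht : 0 ≤ p.2) (hp : 0 ≤ p.2 ^ 2 - c * ‖p.1‖ ^ 2) :
    psi0Inv d c (psi0 d c p) = p :=
  Prod.ext rfl <| by simp only [psi0, psi0Inv, Real.sq_sqrt hp, sub_add_cancel, Real.sqrt_sq ht]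

lemma psi0_psi0Inv {q : Euc d × ℝ} (hv : 0 ≤ q.2) (hq : 0 ≤ q.2 ^ 2 + c * ‖q.1‖ ^ 2) :
    psi0 d c (psi0Inv d c q) = q :=
  Prod.ext rfl <| by
    simp only [psi0, psi0Inv, Real.sq_sqrt hq, add_sub_cancel_right, Real.sqrt_sq hv]

lemma psi0_image_eq {U : Set (Euc d × ℝ)} (hU : U ⊆ psi0Domain d c) :
    psi0 d c '' U = {q | 0 < q.2} ∩ psi0Inv d c ⁻¹' U := by
  ext q
  constructor
  · rintro ⟨p, hp, rfl⟩
    obtain ⟨ht, hx⟩ := hU hp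
    exact ⟨Real.sqrt_pos.2 hx, by rwa [Set.mem_preimage, psi0Inv_psi0 ht.le hx.le]⟩
  · rintro ⟨hv, hqU⟩
    have hq : 0 ≤ q.2 ^ 2 + c * ‖q.1‖ ^ 2 := (Real.sqrt_pos.1 (hU hqU).1).le
    exact ⟨psi0Inv d c q, hqU, psi0_psi0Inv hv.le hq⟩

lemma isOpen_psi0_image {U : Set (Euc d × ℝ)} (hUopen : IsOpen U) (hU : U ⊆ psi0Domain d c) :
    IsOpen (psi0 d c '' U) := by
  rw [psi0_image_eq hU]
  refine (isOpen_lt continuous_const continuous_snd).inter (hUopen.preimage ?_)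
  unfold psi0Inv
  fun_prop

lemma hasFDerivAt_psi0Inv {q : Euc d × ℝ} (hq : 0 < q.2 ^ 2 + c * ‖q.1‖ ^ 2) :
    HasFDerivAt (psi0Inv d c)
      ((ContinuousLinearMap.fst ℝ (Euc d) ℝ).prod
        ((1 / (2 * √(q.2 ^ 2 + c * ‖q.1‖ ^ 2))) •
          ((2 * q.2) • ContinuousLinearMap.snd ℝ (Euc d) ℝ +
            c • (2 • (innerSL ℝ q.1).comp (ContinuousLinearMap.fst ℝ (Euc d) ℝ))))) q := by
  have hsq : HasFDerivAt (fun z : Euc d × ℝ => z.2 ^ 2)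
      ((2 * q.2) • ContinuousLinearMap.snd ℝ (Euc d) ℝ) q := by
    simpa using HasFDerivAt.pow (f := fun z : Euc d × ℝ => z.2) (hasFDerivAt_snd (p := q)) 2
  exact hasFDerivAt_fst.prodMk
    ((hsq.add ((hasFDerivAt_fst (p := q)).norm_sq.const_mul c)).sqrt hq.ne')

lemma ContinuousLinearMap.apply_prod_real {E : Type*} [NormedAddCommGroup E] [NormedSpace ℝ E]
    (L : E × ℝ →L[ℝ] ℝ) (w : E) (a : ℝ) : L (w, a) = L (w, 0) + a * L (0, 1) := by
  rw [← smul_eq_mul, ← L.map_smul, ← map_add, Prod.smul_mk, smul_zero, smul_eq_mul, mul_one,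
    Prod.mk_add_mk, add_zero, zero_add]

lemma fderiv_comp_psi0Inv_apply {g : Euc d × ℝ → ℝ} {q : Euc d × ℝ}
    (hg : DifferentiableAt ℝ g (psi0Inv d c q)) (hq : 0 < q.2 ^ 2 + c * ‖q.1‖ ^ 2)
    (w : Euc d) (a : ℝ) :
    fderiv ℝ (g ∘ psi0Inv d c) q (w, a) = fderiv ℝ g (psi0Inv d c q)
      (w, (q.2 * a + c * inner ℝ q.1 w) / √(q.2 ^ 2 + c * ‖q.1‖ ^ 2)) := by
  rw [(hg.hasFDerivAt.comp q (hasFDerivAt_psi0Inv hq)).fderiv]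
  simp only [ContinuousLinearMap.comp_apply, ContinuousLinearMap.prod_apply,
    ContinuousLinearMap.coe_fst', smul_apply, add_apply, ContinuousLinearMap.coe_snd',
    innerSL_apply_apply, smul_eq_mul, nsmul_eq_mul]
  congr 2
  field_simp
  ring

lemma Pder_comp_psi0Inv_psi0 {g : Euc d × ℝ → ℝ} {p : Euc d × ℝ} (ht : 0 < p.2)
    (hp : 0 ≤ p.2 ^ 2 - c * ‖p.1‖ ^ 2) (hg : DifferentiableAt ℝ g p) (i : Fin (d + 1)) :
    Pder d i (g ∘ psi0Inv d c) (psi0 d c p) = Dfrak d c i g p := by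
  set q := psi0 d c p
  have hsum : q.2 ^ 2 + c * ‖q.1‖ ^ 2 = p.2 ^ 2 := by
    simp only [q, psi0, Real.sq_sqrt hp, sub_add_cancel]
  have hsqrt : √(q.2 ^ 2 + c * ‖q.1‖ ^ 2) = p.2 := by rw [hsum, Real.sqrt_sq ht.le]
  have hinv : psi0Inv d c q = p := psi0Inv_psi0 ht.le hp
  have hq : 0 < q.2 ^ 2 + c * ‖q.1‖ ^ 2 := by rw [hsum]; positivity
  have hgq : DifferentiableAt ℝ g (psi0Inv d c q) := hinv ▸ hg
  unfold Pder Dfrak pdE pdT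
  split_ifs with hi
  · rw [fderiv_comp_psi0Inv_apply hgq hq, hinv, hsqrt, ContinuousLinearMap.apply_prod_real]
    simp only [q, psi0, EuclideanSpace.inner_single_right, conj_trivial]
    field_simp
    ring
  · rw [fderiv_comp_psi0Inv_apply hgq hq, hinv, hsqrt, ContinuousLinearMap.apply_prod_real]
    simp only [q, psi0, inner_zero_right, Prod.mk_zero_zero, map_zero]
    field_simp
    ring

lemma eqOn_Dfrak_comp_psi0Inv {U : Set (Euc d × ℝ)} (hU : U ⊆ psi0Domain d c)
    {g : Euc d × ℝ → ℝ} (hg : ∀ p ∈ U, DifferentiableAt ℝ g p) (i : Fin (d + 1)) :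
    Set.EqOn (Dfrak d c i g ∘ psi0Inv d c) (Pder d i (g ∘ psi0Inv d c)) (psi0 d c '' U) := by
  rintro _ ⟨p, hp, rfl⟩
  obtain ⟨ht, hx⟩ := hU hp
  rw [Function.comp_apply, psi0Inv_psi0 ht.le hx.le, Pder_comp_psi0Inv_psi0 ht hx.le (hg p hp)]

lemma Set.EqOn.Pder_of_isOpen {V : Set (Euc d × ℝ)} (hV : IsOpen V) {f₁ f₂ : Euc d × ℝ → ℝ}
    (h : Set.EqOn f₁ f₂ V) (i : Fin (d + 1)) : Set.EqOn (Pder d i f₁) (Pder d i f₂) V :=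
  fun q hq => by
    simp only [Pder, pdE, pdT, (Filter.eventuallyEq_of_mem (hV.mem_nhds hq) h).fderiv_eq]

lemma Set.EqOn.Pder_iterate_of_isOpen {V : Set (Euc d × ℝ)} (hV : IsOpen V)
    {f₁ f₂ : Euc d × ℝ → ℝ} (h : Set.EqOn f₁ f₂ V) (i : Fin (d + 1)) (r : ℕ) :
    Set.EqOn ((Pder d i)^[r] f₁) ((Pder d i)^[r] f₂) V := by
  induction r generalizing f₁ f₂ with
  | zero => exact h
  | succ r ih =>
    simpa only [Function.iterate_succ_apply] using ih (h.Pder_of_isOpen hV i)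

lemma contDiffOn_Dfrak {U : Set (Euc d × ℝ)} (hUopen : IsOpen U) (hU : U ⊆ psi0Domain d c)
    {r : ℕ} {g : Euc d × ℝ → ℝ} (hg : ContDiffOn ℝ (r + 1 : ℕ) g U) (i : Fin (d + 1)) :
    ContDiffOn ℝ r (Dfrak d c i g) U := by
  have hfd : ContDiffOn ℝ r (fderiv ℝ g) U :=
    hg.fderiv_of_isOpen hUopen (by exact_mod_cast le_refl (r + 1))
  have hpdT : ContDiffOn ℝ r (pdT d g) U := hfd.clm_apply contDiffOn_const
  have ht : ContDiffOn ℝ r (fun p : Euc d × ℝ => p.2) U := contDiff_snd.contDiffOn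
  have ht0 : ∀ p ∈ U, p.2 ≠ 0 := fun p hp => (hU hp).1.ne'
  unfold Dfrak
  split_ifs with hi
  · have hx : ContDiffOn ℝ r (fun p : Euc d × ℝ => p.1 ⟨i, hi⟩) U :=
      (EuclideanSpace.proj (⟨i, hi⟩ : Fin d) : Euc d →L[ℝ] ℝ).contDiff.comp_contDiffOn
        contDiff_fst.contDiffOn
    exact (hfd.clm_apply contDiffOn_const).add
      ((contDiffOn_const.mul (hx.div ht ht0)).mul hpdT)
  · have hw : ContDiffOn ℝ r (fun p : Euc d × ℝ => p.2 ^ 2 - c * ‖p.1‖ ^ 2) U :=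
      ((contDiff_snd.pow 2).sub
        (contDiff_const.mul ((contDiff_norm_sq ℝ).comp contDiff_fst))).contDiffOn
    exact ((hw.sqrt fun p hp => (hU hp).2.ne').div ht ht0).mul hpdT

end

theorem Dfrak_iterate_eq_pullback_deriv_general
    (d : ℕ) (c : ℝ) (r : ℕ)
    (U : Set (Euc d × ℝ)) (hUopen : IsOpen U)
    (hUsub : U ⊆ {p : Euc d × ℝ | 0 < p.2 ∧ 0 < p.2 ^ 2 - c * ‖p.1‖ ^ 2})
    (g : Euc d × ℝ → ℝ) (hg : ContDiffOn ℝ r g U) :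
    ∀ i : Fin (d + 1), ∀ p ∈ U,
      (Dfrak d c i)^[r] g p = (Pder d i)^[r] (g ∘ psi0Inv d c) (psi0 d c p) := by
  intro i
  induction r generalizing g with
  | zero =>
    intro p hp
    rw [Function.iterate_zero_apply, Function.iterate_zero_apply, Function.comp_apply,
      psi0Inv_psi0 (hUsub hp).1.le (hUsub hp).2.le]
  | succ n ih =>
    intro p hp
    have hgd : ∀ p ∈ U, DifferentiableAt ℝ g p := fun p hp =>
      (hg.contDiffAt (hUopen.mem_nhds hp)).differentiableAt (by simp)
    rw [Function.iterate_succ_apply, Function.iterate_succ_apply,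
      ih _ (contDiffOn_Dfrak hUopen hUsub hg i) p hp]
    exact (eqOn_Dfrak_comp_psi0Inv hUsub hgd i).Pder_iterate_of_isOpen
      (isOpen_psi0_image hUopen hUsub) i n ⟨p, hp, rfl⟩

/-- `r`-fold application of `𝔇_i` is the pullback under `ψ` of the
`r`-th partial derivative `∂_{y_i}^r` applied to `g∘ψ⁻¹`: `𝔇_i^r g = (∂_{y_i}^r (g∘ψ⁻¹))∘ψ`. -/
theorem Dfrak_iterate_eq_pullback_deriv
    (d : ℕ) (hd : 1 ≤ d) (c : ℝ) (hc : 0 ≤ c) (r : ℕ) (hr : 1 ≤ r)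
    (U : Set (Euc d × ℝ)) (hUopen : IsOpen U)
    (hUsub : U ⊆ {p : Euc d × ℝ | 0 < p.2 ∧ 0 < p.2 ^ 2 - c * ‖p.1‖ ^ 2})
    (g : Euc d × ℝ → ℝ) (hg : ContDiffOn ℝ r g U) :
    ∀ i : Fin (d + 1), ∀ p ∈ U,
      (Dfrak d c i)^[r] g p = (Pder d i)^[r] (g ∘ psi0Inv d c) (psi0 d c p) :=
  Dfrak_iterate_eq_pullback_deriv_general d c r U hUopen hUsub g hg
end
end

section
/- Let d ≥ 1 and n ∈ ℕ. If G(y,v) = H(y,v²) is a polynomial on ℝ^{d+1} of degree at most n that is even in the last variable, then G(ψ(x,t)) = H(x, (−a+(a−c)‖x‖²+t²)/(b−a)) for all (x,t) ∈ Λ^{d+1}_{a,b,c}, and the right-hand side is a polynomial in (x,t), even in t, of degree at most n. Conversely, if g(x,t) = h(x,t²) is a polynomial of degree at most n even in t, then g(ψ⁻¹(y,v)) = h(y, (b−a)v² + a(1−‖y‖²) + c‖y‖²) for all (y,v) ∈ B^{d+1}₊, and the right-hand side is a polynomial in (y,v), even in v, of degree at most n. These two assignments G ↦ G∘ψ and g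 ↦ g∘ψ⁻¹ are mutually inverse bijections between the set of polynomials of degree at most n even in the last variable viewed as functions on B^{d+1}₊ and the same set viewed as functions on Λ^{d+1}_{a,b,c}. -/
open MeasureTheory

noncomputable section

/-- The domain `Λ^{d+1}_{a,b,c}`. -/
def LamD (d : ℕ) (a b c : ℝ) : Set (Euc d × ℝ) :=
  {p | 0 ≤ p.2 ∧ ‖p.1‖ ≤ 1 ∧ a + (c - a) * ‖p.1‖ ^ 2 ≤ p.2 ^ 2 ∧
       p.2 ^ 2 ≤ b + (c - b) * ‖p.1‖ ^ 2}

/-- The closed upper half-ball `B^{d+1}₊`. -/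
def ballPlus (d : ℕ) : Set (Euc d × ℝ) := {p | ‖p.1‖ ^ 2 + p.2 ^ 2 ≤ 1 ∧ 0 ≤ p.2}

/-- The function `𝔱(r,t) = sqrt((−a+(a−c)r²+t²)/(b−a))`. -/
def fraktD (a b c r t : ℝ) : ℝ :=
  Real.sqrt ((-a + (a - c) * r ^ 2 + t ^ 2) / (b - a))

/-- The map `ψ(x,t) = (x, 𝔱(‖x‖,t))`. -/
def psiD (d : ℕ) (a b c : ℝ) (p : Euc d × ℝ) : Euc d × ℝ :=
  (p.1, fraktD a b c ‖p.1‖ p.2)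

/-- The inverse map `ψ⁻¹(y,v) = (y, sqrt((b−a)v² + a(1−‖y‖²) + c‖y‖²))`. -/
def psiDInv (d : ℕ) (a b c : ℝ) (p : Euc d × ℝ) : Euc d × ℝ :=
  (p.1, Real.sqrt ((b - a) * p.2 ^ 2 + a * (1 - ‖p.1‖ ^ 2) + c * ‖p.1‖ ^ 2))

/-- Evaluation of a polynomial in `d+1` variables at a point of `ℝ^d × ℝ`. -/
def evP (d : ℕ) (R : MvPolynomial (Fin (d + 1)) ℝ) (p : Euc d × ℝ) : ℝ :=
  MvPolynomial.eval (Fin.snoc (fun i => p.1 i) p.2) R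

/-- A polynomial in `d+1` variables is even in the last variable. -/
def EvenLast (d : ℕ) (R : MvPolynomial (Fin (d + 1)) ℝ) : Prop :=
  ∀ (x : Euc d) (t : ℝ), evP d R (x, -t) = evP d R (x, t)

/-- Functions `ℝ^d × ℝ → ℝ` given by a polynomial of degree at most `n` that is even
in the last variable. -/
def EvenPolyFunD (d n : ℕ) : Set (Euc d × ℝ → ℝ) :=
  {F | ∃ P : MvPolynomial (Fin (d + 1)) ℝ, P.totalDegree ≤ n ∧ EvenLast d P ∧
    ∀ p : Euc d × ℝ, F p = evP d P p}

/-! An even polynomial `G` is `H(y, v²)` for a unique polynomial `H`. On `Λ` and on `B₊` the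
last coordinate of `ψ` resp. `ψ⁻¹` squares to a quadratic `q(x,t) = α‖x‖² + βt² + γ`, so
`G ∘ ψ` resp. `g ∘ ψ⁻¹` is the polynomial `H(x, q(x,t))`, again even in `t`. Its degree is at
most the degree of `H` when the last variable gets weight 2, and that weighted degree is exactly
`deg G`. Both domains have interior points, and polynomials agreeing on an open set are equal, which
gives uniqueness; `ψ ∘ ψ⁻¹ = id` on `B₊` makes the two assignments inverse to each other. -/

namespace MvPolynomial
variable {σ R : Type*} [CommSemiring R]

theorem bind₁_X_pow_monomial (w : σ → ℕ) (m : σ →₀ ℕ) (r : R) :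
    bind₁ (fun i => X i ^ w i) (monomial m r) = monomial (w • m) r := by
  rw [bind₁_monomial, monomial_eq, Finsupp.prod_of_support_subset (w • m) (s := m.support)]
  · simp [pow_mul, mul_comm]
  · intro i; simp +contextual
  · simp

theorem coeff_smul_bind₁_X_pow {w : σ → ℕ} (hw : ∀ i, w i ≠ 0) (φ : MvPolynomial σ R)
    (m : σ →₀ ℕ) : coeff (w • m) (bind₁ (fun i => X i ^ w i) φ) = coeff m φ := by
  classical
  induction φ using MvPolynomial.induction_on' with
  | monomial m' r =>
    have hinj : w • m' = w • m ↔ m' = m :=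
      ⟨fun h => Finsupp.ext fun i =>
        Nat.eq_of_mul_eq_mul_left (Nat.pos_of_ne_zero (hw i)) (DFunLike.congr_fun h i),
        congrArg _⟩
    simp only [bind₁_X_pow_monomial, coeff_monomial, hinj]
  | add p q hp hq => simp only [map_add, coeff_add, hp, hq]

theorem weightedTotalDegree_le_totalDegree_bind₁_X_pow {w : σ → ℕ} (hw : ∀ i, w i ≠ 0)
    (φ : MvPolynomial σ R) :
    weightedTotalDegree w φ ≤ (bind₁ (fun i => X i ^ w i) φ).totalDegree := by
  refine Finset.sup_le fun m hm => ?_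
  have hmem : w • m ∈ (bind₁ (fun i => X i ^ w i) φ).support := by
    rw [mem_support_iff, coeff_smul_bind₁_X_pow hw]
    exact mem_support_iff.mp hm
  refine le_of_eq_of_le ?_ (le_totalDegree hmem)
  rw [Finsupp.weight_apply, Finsupp.sum_of_support_subset (w • m) (s := m.support)]
  · simp [Finsupp.sum, mul_comm]
  · intro i; simp +contextual
  · simp

theorem totalDegree_bind₁_le_weightedTotalDegree {τ : Type*} {f : σ → MvPolynomial τ R}
    {w : σ → ℕ} (hf : ∀ i, (f i).totalDegree ≤ w i) (φ : MvPolynomial σ R) :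
    (bind₁ f φ).totalDegree ≤ weightedTotalDegree w φ := by
  conv_lhs => rw [φ.as_sum, map_sum]
  refine totalDegree_finsetSum_le fun m hm => ?_
  calc (bind₁ f (monomial m (coeff m φ))).totalDegree
      ≤ ∑ i ∈ m.support, m i * (f i).totalDegree := by
        rw [bind₁_monomial]
        refine (totalDegree_mul _ _).trans ?_
        rw [totalDegree_C, zero_add]
        exact (totalDegree_finsetProd _ _).trans (Finset.sum_le_sum fun i _ => totalDegree_pow _ _)
    _ ≤ ∑ i ∈ m.support, m i * w i := Finset.sum_le_sum fun i _ => Nat.mul_le_mul_left _ (hf i)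
    _ = Finsupp.weight w m := by simp [Finsupp.weight_apply, Finsupp.sum]
    _ ≤ weightedTotalDegree w φ := le_weightedTotalDegree w hm

theorem exists_bind₁_X_pow_eq {w : σ → ℕ} {φ : MvPolynomial σ R}
    (h : ∀ m ∈ φ.support, ∃ m', w • m' = m) : ∃ ψ, bind₁ (fun i => X i ^ w i) ψ = φ := by
  choose! g hg using h
  refine ⟨∑ m ∈ φ.support, monomial (g m) (coeff m φ), ?_⟩
  rw [map_sum]
  conv_rhs => rw [φ.as_sum]
  exact Finset.sum_congr rfl fun m hm => by rw [bind₁_X_pow_monomial, hg m hm]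

theorem coeff_bind₁_C_mul_X (c : σ → R) (φ : MvPolynomial σ R) (m : σ →₀ ℕ) :
    coeff m (bind₁ (fun i => C (c i) * X i) φ) = coeff m φ * m.prod fun i k => c i ^ k := by
  classical
  induction φ using MvPolynomial.induction_on' with
  | monomial m' r =>
    rw [bind₁_monomial]
    simp only [mul_pow, Finset.prod_mul_distrib, ← map_pow, ← map_prod]
    rw [← Finsupp.prod, ← Finsupp.prod, ← monomial_eq, C_mul_monomial, coeff_monomial,
      coeff_monomial]
    split_ifs with h
    · rw [h]
    · rw [zero_mul]
  | add p q hp hq => simp only [map_add, coeff_add, hp, hq, add_mul]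

end MvPolynomial

open MvPolynomial Set

variable {d : ℕ}

theorem evP_injective : Function.Injective (evP d) := by
  intro P Q h
  refine MvPolynomial.funext fun f => ?_
  simpa [evP, Fin.snoc_init_self] using congrFun h (WithLp.toLp 2 (Fin.init f), f (Fin.last d))

theorem evP_bind₁ {f : Fin (d + 1) → MvPolynomial (Fin (d + 1)) ℝ} {p : Euc d × ℝ} {x : Euc d}
    {t : ℝ} (hx : ∀ j, evP d (f j.castSucc) p = x j) (ht : evP d (f (Fin.last d)) p = t)
    (P : MvPolynomial (Fin (d + 1)) ℝ) : evP d (bind₁ f P) p = evP d P (x, t) := by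
  have hf : (fun i => evP d (f i) p) = Fin.snoc (fun j => x j) t := by
    funext i
    induction i using Fin.lastCases <;> simp [hx, ht]
  change _ = eval (Fin.snoc (fun j => x j) t) P
  rw [← hf]
  simp only [evP, ← coe_aeval_eq_eval]
  exact aeval_bind₁ _ _ _

def lastWeight (d : ℕ) : Fin (d + 1) → ℕ := Function.update 1 (Fin.last d) 2

def lastSign (d : ℕ) : Fin (d + 1) → ℝ := Function.update 1 (Fin.last d) (-1)

theorem evP_bind₁_X_pow_lastWeight (H : MvPolynomial (Fin (d + 1)) ℝ) (x : Euc d) (t : ℝ) :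
    evP d (bind₁ (fun i => X i ^ lastWeight d i) H) (x, t) = evP d H (x, t ^ 2) :=
  evP_bind₁ (fun j => by simp [lastWeight, evP, (Fin.castSucc_lt_last j).ne])
    (by simp [lastWeight, evP]) H

theorem evP_bind₁_update_last (Q H : MvPolynomial (Fin (d + 1)) ℝ) (p : Euc d × ℝ) :
    evP d (bind₁ (Function.update X (Fin.last d) Q) H) p = evP d H (p.1, evP d Q p) :=
  evP_bind₁ (fun j => by simp [evP, (Fin.castSucc_lt_last j).ne]) (by simp) H

theorem evP_bind₁_neg_last (P : MvPolynomial (Fin (d + 1)) ℝ) (x : Euc d) (t : ℝ) :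
    evP d (bind₁ (fun i => C (lastSign d i) * X i) P) (x, t) = evP d P (x, -t) :=
  evP_bind₁ (fun j => by simp [lastSign, evP, (Fin.castSucc_lt_last j).ne])
    (by simp [lastSign, evP]) P

theorem EvenLast.coeff_eq_zero {P : MvPolynomial (Fin (d + 1)) ℝ} (hP : EvenLast d P)
    {m : Fin (d + 1) →₀ ℕ} (hm : Odd (m (Fin.last d))) : coeff m P = 0 := by
  have hflip : bind₁ (fun i => C (lastSign d i) * X i) P = P :=
    evP_injective (funext fun p => by rw [evP_bind₁_neg_last, hP])
  have hsign : (m.prod fun i k => lastSign d i ^ k) = -1 := by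
    rw [Finsupp.prod_pow, Fintype.prod_eq_single (Fin.last d) fun i hi => by simp [lastSign, hi]]
    simpa [lastSign] using hm.neg_one_pow
  have := coeff_bind₁_C_mul_X (lastSign d) P m
  rw [hflip, hsign] at this
  linarith

theorem EvenLast.exists_bind₁_X_pow_lastWeight_eq {P : MvPolynomial (Fin (d + 1)) ℝ}
    (hP : EvenLast d P) : ∃ H, bind₁ (fun i => X i ^ lastWeight d i) H = P := by
  refine exists_bind₁_X_pow_eq fun m hm => ⟨m.update (Fin.last d) (m (Fin.last d) / 2), ?_⟩
  have heven : Even (m (Fin.last d)) := by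
    by_contra hodd
    exact mem_support_iff.mp hm (hP.coeff_eq_zero (Nat.not_even_iff_odd.mp hodd))
  ext i
  rcases eq_or_ne i (Fin.last d) with rfl | hi
  · simp [lastWeight, Nat.two_mul_div_two_of_even heven]
  · simp [lastWeight, hi]

theorem evenLast_bind₁_update_last {Q : MvPolynomial (Fin (d + 1)) ℝ}
    (hQ : ∀ (x : Euc d) (t : ℝ), evP d Q (x, -t) = evP d Q (x, t))
    (H : MvPolynomial (Fin (d + 1)) ℝ) : EvenLast d (bind₁ (Function.update X (Fin.last d) Q) H) :=
  fun x t => by simp only [evP_bind₁_update_last, hQ]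

theorem totalDegree_bind₁_update_last_le {Q : MvPolynomial (Fin (d + 1)) ℝ}
    (hQ : Q.totalDegree ≤ 2) (H : MvPolynomial (Fin (d + 1)) ℝ) :
    (bind₁ (Function.update X (Fin.last d) Q) H).totalDegree
      ≤ (bind₁ (fun i => X i ^ lastWeight d i) H).totalDegree := by
  refine (totalDegree_bind₁_le_weightedTotalDegree (w := lastWeight d) (fun i => ?_) H).trans
    (weightedTotalDegree_le_totalDegree_bind₁_X_pow (fun i => ?_) H)
  · rcases eq_or_ne i (Fin.last d) with rfl | hi
    · simpa [lastWeight] using hQ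
    · simp [lastWeight, hi, totalDegree_X]
  · rcases eq_or_ne i (Fin.last d) with rfl | hi <;> simp [lastWeight, *]

def quadLast (d : ℕ) (α β γ : ℝ) : MvPolynomial (Fin (d + 1)) ℝ :=
  C α * ∑ j : Fin d, X j.castSucc ^ 2 + C β * X (Fin.last d) ^ 2 + C γ

theorem evP_quadLast (α β γ : ℝ) (p : Euc d × ℝ) :
    evP d (quadLast d α β γ) p = α * ‖p.1‖ ^ 2 + β * p.2 ^ 2 + γ := by
  simp [quadLast, evP, EuclideanSpace.norm_sq_eq]

theorem totalDegree_quadLast_le (α β γ : ℝ) : (quadLast d α β γ).totalDegree ≤ 2 := by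
  have hC : ∀ (r : ℝ) (P : MvPolynomial (Fin (d + 1)) ℝ), (C r * P).totalDegree ≤ P.totalDegree :=
    fun r P => (totalDegree_mul _ _).trans (by rw [totalDegree_C, zero_add])
  refine (totalDegree_add _ _).trans (max_le ((totalDegree_add _ _).trans (max_le ?_ ?_)) ?_)
  · exact (hC _ _).trans (totalDegree_finsetSum_le fun j _ => (totalDegree_X_pow _ _).le)
  · exact (hC _ _).trans (totalDegree_X_pow _ _).le
  · simp

theorem exists_evenLast_evP_eq_quadLast {n : ℕ} {G H : MvPolynomial (Fin (d + 1)) ℝ}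
    (hG : G.totalDegree ≤ n) (hGH : ∀ (x : Euc d) (t : ℝ), evP d G (x, t) = evP d H (x, t ^ 2))
    (α β γ : ℝ) :
    ∃ Gt : MvPolynomial (Fin (d + 1)) ℝ, Gt.totalDegree ≤ n ∧ EvenLast d Gt ∧
      ∀ p, evP d Gt p = evP d H (p.1, α * ‖p.1‖ ^ 2 + β * p.2 ^ 2 + γ) := by
  have hGsq : G = bind₁ (fun i => X i ^ lastWeight d i) H :=
    evP_injective (funext fun p => by rw [hGH, evP_bind₁_X_pow_lastWeight])
  refine ⟨bind₁ (Function.update X (Fin.last d) (quadLast d α β γ)) H, ?_, ?_, fun p => ?_⟩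
  · exact (totalDegree_bind₁_update_last_le (totalDegree_quadLast_le α β γ) H).trans (hGsq ▸ hG)
  · exact evenLast_bind₁_update_last (fun x t => by simp only [evP_quadLast, neg_sq]) H
  · rw [evP_bind₁_update_last, evP_quadLast]

theorem analyticOnNhd_evP (P : MvPolynomial (Fin (d + 1)) ℝ) :
    AnalyticOnNhd ℝ (evP d P) univ := by
  intro z _
  change AnalyticAt ℝ (fun p : Euc d × ℝ => aeval (Fin.snoc (fun i => p.1 i) p.2) P) z
  refine AnalyticAt.aeval_mvPolynomial (fun i => ?_) P
  induction i using Fin.lastCases with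
  | last => simpa using analyticAt_snd
  | cast j =>
    simp only [Fin.snoc_castSucc]
    exact ((EuclideanSpace.proj j).comp (ContinuousLinearMap.fst ℝ _ ℝ)).analyticAt z

theorem eq_of_eqOn_evP {S : Set (Euc d × ℝ)} (hS : (interior S).Nonempty)
    {P Q : MvPolynomial (Fin (d + 1)) ℝ} (h : EqOn (evP d P) (evP d Q) S) : P = Q := by
  obtain ⟨z, hz⟩ := hS
  exact evP_injective <| AnalyticOnNhd.eq_of_eventuallyEq (analyticOnNhd_evP P)
    (analyticOnNhd_evP Q) (Filter.eventuallyEq_of_mem (mem_interior_iff_mem_nhds.mp hz) h)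

theorem existsUnique_evenPolyFun_eqOn_comp {n : ℕ} {S : Set (Euc d × ℝ)}
    (hS : (interior S).Nonempty) {φ : Euc d × ℝ → Euc d × ℝ} {α β γ : ℝ}
    (hφ : ∀ p ∈ S, (φ p).1 = p.1 ∧ (φ p).2 ^ 2 = α * ‖p.1‖ ^ 2 + β * p.2 ^ 2 + γ)
    {G : Euc d × ℝ → ℝ} (hG : G ∈ EvenPolyFunD d n) :
    ∃! F, F ∈ EvenPolyFunD d n ∧ ∀ p ∈ S, F p = G (φ p) := by
  obtain ⟨P, hPdeg, hPeven, hGP⟩ := hG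
  obtain rfl : G = evP d P := funext hGP
  obtain ⟨H, rfl⟩ := hPeven.exists_bind₁_X_pow_lastWeight_eq
  obtain ⟨Gt, hdeg, heven, hGt⟩ :=
    exists_evenLast_evP_eq_quadLast hPdeg (evP_bind₁_X_pow_lastWeight H) α β γ
  have hcomp : ∀ p ∈ S, evP d Gt p = evP d (bind₁ (fun i => X i ^ lastWeight d i) H) (φ p) := by
    intro p hp
    obtain ⟨h1, h2⟩ := hφ p hp
    rw [hGt, ← h2, ← h1, ← evP_bind₁_X_pow_lastWeight]
  refine ⟨evP d Gt, ⟨⟨Gt, hdeg, heven, fun _ => rfl⟩, hcomp⟩, ?_⟩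
  rintro F ⟨⟨P', -, -, hP'⟩, hF⟩
  have hP'Gt : P' = Gt := eq_of_eqOn_evP hS fun p hp => by rw [← hP', hF p hp, hcomp p hp]
  rw [← hP'Gt]
  exact funext hP'

section Geometry

variable {a b c : ℝ}

theorem fraktD_sq (hab : a < b) {p : Euc d × ℝ} (hp : p ∈ LamD d a b c) :
    fraktD a b c ‖p.1‖ p.2 ^ 2 = (-a + (a - c) * ‖p.1‖ ^ 2 + p.2 ^ 2) / (b - a) := by
  obtain ⟨-, -, hlow, -⟩ := hp
  exact Real.sq_sqrt (div_nonneg (by linarith) (by linarith))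

theorem psiDInv_snd_sq (ha : 0 ≤ a) (hab : a < b) (hc : 0 ≤ c) {p : Euc d × ℝ}
    (hp : p ∈ ballPlus d) :
    (psiDInv d a b c p).2 ^ 2 = (b - a) * p.2 ^ 2 + a * (1 - ‖p.1‖ ^ 2) + c * ‖p.1‖ ^ 2 := by
  obtain ⟨h1, -⟩ := hp
  exact Real.sq_sqrt (by nlinarith [sq_nonneg p.2, sq_nonneg ‖p.1‖])

theorem psiDInv_mem_LamD (ha : 0 ≤ a) (hab : a < b) (hc : 0 ≤ c) {p : Euc d × ℝ}
    (hp : p ∈ ballPlus d) : psiDInv d a b c p ∈ LamD d a b c := by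
  have hsq := psiDInv_snd_sq ha hab hc hp
  obtain ⟨h1, h2⟩ := hp
  refine ⟨Real.sqrt_nonneg _, ?_, ?_, ?_⟩
  · show ‖p.1‖ ≤ 1
    nlinarith [norm_nonneg p.1]
  · rw [hsq]
    show a + (c - a) * ‖p.1‖ ^ 2 ≤ _
    nlinarith
  · rw [hsq]
    show _ ≤ b + (c - b) * ‖p.1‖ ^ 2
    nlinarith

theorem psiD_psiDInv (ha : 0 ≤ a) (hab : a < b) (hc : 0 ≤ c) {p : Euc d × ℝ}
    (hp : p ∈ ballPlus d) : psiD d a b c (psiDInv d a b c p) = p := by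
  have hsq := psiDInv_snd_sq ha hab hc hp
  refine Prod.ext rfl ?_
  change Real.sqrt ((-a + (a - c) * ‖p.1‖ ^ 2 + (psiDInv d a b c p).2 ^ 2) / (b - a)) = p.2
  rw [hsq, show (-a + (a - c) * ‖p.1‖ ^ 2
      + ((b - a) * p.2 ^ 2 + a * (1 - ‖p.1‖ ^ 2) + c * ‖p.1‖ ^ 2)) / (b - a) = p.2 ^ 2 by
    field_simp [(sub_pos.mpr hab).ne']; ring]
  exact Real.sqrt_sq hp.2

theorem interior_LamD_nonempty (ha : 0 ≤ a) (hab : a < b) :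
    (interior (LamD d a b c)).Nonempty := by
  have hU : IsOpen {p : Euc d × ℝ | 0 < p.2 ∧ ‖p.1‖ < 1 ∧ a + (c - a) * ‖p.1‖ ^ 2 < p.2 ^ 2 ∧
      p.2 ^ 2 < b + (c - b) * ‖p.1‖ ^ 2} := by
    simp only [ofPred_and]
    refine (isOpen_lt ?_ ?_).inter ((isOpen_lt ?_ ?_).inter ((isOpen_lt ?_ ?_).inter
      (isOpen_lt ?_ ?_))) <;> fun_prop
  refine ⟨(0, √((a + b) / 2)), interior_maximal ?_ hU ?_⟩
  · exact fun p hp => ⟨hp.1.le, hp.2.1.le, hp.2.2.1.le, hp.2.2.2.le⟩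
  · have hsq := Real.sq_sqrt (show 0 ≤ (a + b) / 2 by linarith)
    refine ⟨Real.sqrt_pos.mpr (by linarith), by simp, ?_, ?_⟩ <;>
      simp only [norm_zero, hsq] <;> linarith

theorem interior_ballPlus_nonempty : (interior (ballPlus d)).Nonempty := by
  have hU : IsOpen {p : Euc d × ℝ | ‖p.1‖ ^ 2 + p.2 ^ 2 < 1 ∧ 0 < p.2} := by
    simp only [ofPred_and]
    refine (isOpen_lt ?_ ?_).inter (isOpen_lt ?_ ?_) <;> fun_prop
  refine ⟨(0, 1 / 2), interior_maximal ?_ hU ?_⟩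
  · exact fun p hp => ⟨hp.1.le, hp.2.le⟩
  · norm_num

end Geometry

theorem even_polynomials_correspondence_D_general
    (d : ℕ) (a b c : ℝ) (ha : 0 ≤ a) (hab : a < b) (hc : 0 ≤ c) (n : ℕ) :
    -- explicit formula for `G∘ψ`
    (∀ G H : MvPolynomial (Fin (d + 1)) ℝ, G.totalDegree ≤ n →
      (∀ (x : Euc d) (t : ℝ), evP d G (x, t) = evP d H (x, t ^ 2)) →
      (∀ p ∈ LamD d a b c,
        evP d G (psiD d a b c p)
          = evP d H (p.1, (-a + (a - c) * ‖p.1‖ ^ 2 + p.2 ^ 2) / (b - a))) ∧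
      ∃ Gt : MvPolynomial (Fin (d + 1)) ℝ, Gt.totalDegree ≤ n ∧ EvenLast d Gt ∧
        ∀ p : Euc d × ℝ,
          evP d Gt p
            = evP d H (p.1, (-a + (a - c) * ‖p.1‖ ^ 2 + p.2 ^ 2) / (b - a))) ∧
    -- explicit formula for `g∘ψ⁻¹`
    (∀ g h : MvPolynomial (Fin (d + 1)) ℝ, g.totalDegree ≤ n →
      (∀ (x : Euc d) (t : ℝ), evP d g (x, t) = evP d h (x, t ^ 2)) →
      (∀ p ∈ ballPlus d,
        evP d g (psiDInv d a b c p)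
          = evP d h (p.1, (b - a) * p.2 ^ 2 + a * (1 - ‖p.1‖ ^ 2) + c * ‖p.1‖ ^ 2)) ∧
      ∃ gt : MvPolynomial (Fin (d + 1)) ℝ, gt.totalDegree ≤ n ∧ EvenLast d gt ∧
        ∀ p : Euc d × ℝ,
          evP d gt p
            = evP d h (p.1, (b - a) * p.2 ^ 2 + a * (1 - ‖p.1‖ ^ 2) + c * ‖p.1‖ ^ 2)) ∧
    -- `G ↦ G∘ψ` is a bijection onto the even polynomial functions on `Λ^{d+1}_{a,b,c}`
    (∀ G ∈ EvenPolyFunD d n, ∃! F, F ∈ EvenPolyFunD d n ∧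
      ∀ p ∈ LamD d a b c, F p = G (psiD d a b c p)) ∧
    -- `g ↦ g∘ψ⁻¹` is a bijection onto the even polynomial functions on `B^{d+1}₊`
    (∀ F ∈ EvenPolyFunD d n, ∃! G, G ∈ EvenPolyFunD d n ∧
      ∀ p ∈ ballPlus d, G p = F (psiDInv d a b c p)) ∧
    -- the two assignments are mutually inverse
    (∀ G ∈ EvenPolyFunD d n, ∀ F ∈ EvenPolyFunD d n,
      (∀ p ∈ LamD d a b c, F p = G (psiD d a b c p)) →
      ∀ p ∈ ballPlus d, G p = F (psiDInv d a b c p)) := by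
  have hψ : ∀ p ∈ LamD d a b c, (psiD d a b c p).1 = p.1 ∧ (psiD d a b c p).2 ^ 2
      = (a - c) / (b - a) * ‖p.1‖ ^ 2 + 1 / (b - a) * p.2 ^ 2 + -a / (b - a) :=
    fun p hp => ⟨rfl, (fraktD_sq hab hp).trans (by ring)⟩
  have hψInv : ∀ p ∈ ballPlus d, (psiDInv d a b c p).1 = p.1 ∧ (psiDInv d a b c p).2 ^ 2
      = (c - a) * ‖p.1‖ ^ 2 + (b - a) * p.2 ^ 2 + a :=
    fun p hp => ⟨rfl, (psiDInv_snd_sq ha hab hc hp).trans (by ring)⟩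
  refine ⟨fun G H hG hGH => ⟨fun p hp => ?_, ?_⟩, fun g h hg hgh => ⟨fun p hp => ?_, ?_⟩,
    fun G hG => existsUnique_evenPolyFun_eqOn_comp (interior_LamD_nonempty ha hab) hψ hG,
    fun F hF => existsUnique_evenPolyFun_eqOn_comp interior_ballPlus_nonempty hψInv hF,
    fun G _ F _ hFG p hp => by
      rw [hFG _ (psiDInv_mem_LamD ha hab hc hp), psiD_psiDInv ha hab hc hp]⟩
  · exact (hGH _ _).trans (congrArg (fun s => evP d H (p.1, s)) (fraktD_sq hab hp))
  · obtain ⟨Gt, hdeg, heven, hGt⟩ :=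
      exists_evenLast_evP_eq_quadLast hG hGH ((a - c) / (b - a)) (1 / (b - a)) (-a / (b - a))
    exact ⟨Gt, hdeg, heven, fun p => by rw [hGt]; congr 2; ring⟩
  · exact (hgh _ _).trans (congrArg (fun s => evP d h (p.1, s)) (psiDInv_snd_sq ha hab hc hp))
  · obtain ⟨gt, hdeg, heven, hgt⟩ := exists_evenLast_evP_eq_quadLast hg hgh (c - a) (b - a) a
    exact ⟨gt, hdeg, heven, fun p => by rw [hgt]; congr 2; ring⟩

/-- composition with `ψ` resp. `ψ⁻¹` gives mutually inverse bijections
between polynomials of degree at most `n` even in the last variable, viewed as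
functions on `B^{d+1}₊` resp. on `Λ^{d+1}_{a,b,c}`, with the stated explicit formulas. -/
theorem even_polynomials_correspondence_D
    (d : ℕ) (hd : 1 ≤ d) (a b c : ℝ) (ha : 0 ≤ a) (hab : a < b) (hc : 0 ≤ c) (n : ℕ) :
    -- explicit formula for `G∘ψ`
    (∀ G H : MvPolynomial (Fin (d + 1)) ℝ, G.totalDegree ≤ n →
      (∀ (x : Euc d) (t : ℝ), evP d G (x, t) = evP d H (x, t ^ 2)) →
      (∀ p ∈ LamD d a b c,
        evP d G (psiD d a b c p)
          = evP d H (p.1, (-a + (a - c) * ‖p.1‖ ^ 2 + p.2 ^ 2) / (b - a))) ∧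
      ∃ Gt : MvPolynomial (Fin (d + 1)) ℝ, Gt.totalDegree ≤ n ∧ EvenLast d Gt ∧
        ∀ p : Euc d × ℝ,
          evP d Gt p
            = evP d H (p.1, (-a + (a - c) * ‖p.1‖ ^ 2 + p.2 ^ 2) / (b - a))) ∧
    -- explicit formula for `g∘ψ⁻¹`
    (∀ g h : MvPolynomial (Fin (d + 1)) ℝ, g.totalDegree ≤ n →
      (∀ (x : Euc d) (t : ℝ), evP d g (x, t) = evP d h (x, t ^ 2)) →
      (∀ p ∈ ballPlus d,
        evP d g (psiDInv d a b c p)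
          = evP d h (p.1, (b - a) * p.2 ^ 2 + a * (1 - ‖p.1‖ ^ 2) + c * ‖p.1‖ ^ 2)) ∧
      ∃ gt : MvPolynomial (Fin (d + 1)) ℝ, gt.totalDegree ≤ n ∧ EvenLast d gt ∧
        ∀ p : Euc d × ℝ,
          evP d gt p
            = evP d h (p.1, (b - a) * p.2 ^ 2 + a * (1 - ‖p.1‖ ^ 2) + c * ‖p.1‖ ^ 2)) ∧
    -- `G ↦ G∘ψ` is a bijection onto the even polynomial functions on `Λ^{d+1}_{a,b,c}`
    (∀ G ∈ EvenPolyFunD d n, ∃! F, F ∈ EvenPolyFunD d n ∧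
      ∀ p ∈ LamD d a b c, F p = G (psiD d a b c p)) ∧
    -- `g ↦ g∘ψ⁻¹` is a bijection onto the even polynomial functions on `B^{d+1}₊`
    (∀ F ∈ EvenPolyFunD d n, ∃! G, G ∈ EvenPolyFunD d n ∧
      ∀ p ∈ ballPlus d, G p = F (psiDInv d a b c p)) ∧
    -- the two assignments are mutually inverse
    (∀ G ∈ EvenPolyFunD d n, ∀ F ∈ EvenPolyFunD d n,
      (∀ p ∈ LamD d a b c, F p = G (psiD d a b c p)) →
      ∀ p ∈ ballPlus d, G p = F (psiDInv d a b c p)) :=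
  even_polynomials_correspondence_D_general d a b c ha hab hc n
end
end
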